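/- Abstract space is invariant under η-expansion: let t be a closed λ-term, e an environment with dom(e) = fv(t), c a closure and S a stack of closed closures, and for each n ∈ ℕ let ρn be the complete Space KAM run from the state (η^n(t), e, c·S), with η^n(t) taken as part of the initial code. Then the abstract space of ρn equals the abstract space of ρ0, and the space of ρn is O(log n · space(ρ0)). -/

import Mathlib

set_option autoImplicit false

/-! λ-terms with variable names in ℕ. -/
inductive Term : Type
  | var : ℕ → Term
  | lam : ℕ → Term → Term
  | app : Term → Term → Term
deriving DecidableEq

namespace Term

/-- Free variables. -/
def fv : Term → Finset ℕ
  | var x => {x}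
  | lam x t => fv t \ {x}
  | app t u => fv t ∪ fv u

/-- A term is closed if it has no free variables. -/
def closed (t : Term) : Prop := t.fv = ∅

/-- Substitution of `u` for the free occurrences of `x`; it is capture-avoiding
whenever the substituted term `u` is closed, which is the only case arising in
Closed Call-by-Name. -/
def subst (x : ℕ) (u : Term) : Term → Term
  | var y => if y = x then u else var y
  | lam y t => if y = x then lam y t else lam y (subst x u t)
  | app t r => app (subst x u t) (subst x u r)

/-- In-order (left-to-right) enumeration of the constructors (as subterm occurrences). -/
def inorder : Term → List Term
  | var x => [var x]
  | lam x t => lam x t :: inorder t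
  | app t u => inorder t ++ app t u :: inorder u

/-- Membership in the deterministic λ-calculus `Λdet`: the right subterm of every
application is a variable or an abstraction. -/
def IsDet : Term → Prop
  | var _ => True
  | lam _ t => IsDet t
  | app t u => IsDet t ∧ IsDet u ∧ ((∃ x, u = var x) ∨ ∃ x r, u = lam x r)

end Term

/-- Weak head reduction: `(λx.t) u r1 … rh →wh t{x:=u} r1 … rh`. -/
inductive Whr : Term → Term → Prop
  | beta (x : ℕ) (t u : Term) : Whr (Term.app (Term.lam x t) u) (Term.subst x u t)
  | appL {t t' : Term} (u : Term) : Whr t t' → Whr (Term.app t u) (Term.app t' u)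

def WhNormal (t : Term) : Prop := ∀ u, ¬ Whr t u

/-- `NSteps R n a b`: exactly `n` `R`-steps from `a` to `b`. -/
inductive NSteps {α : Type _} (R : α → α → Prop) : ℕ → α → α → Prop
  | refl (a : α) : NSteps R 0 a a
  | head {a b c : α} {n : ℕ} : R a b → NSteps R n b c → NSteps R (n + 1) a c

/-! Closures and (local) environments. -/
mutual
  inductive Clo : Type
    | mk : Term → Env → Clo
  inductive Env : Type
    | nil : Env
    | cons : ℕ → Clo → Env → Env
end

def Env.lookup : Env → ℕ → Option Clo
  | .nil, _ => none
  | .cons y c e, x => if y = x then some c else Env.lookup e x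

def Env.dom : Env → Finset ℕ
  | .nil => ∅
  | .cons x _ e => insert x (Env.dom e)

/-- Restriction `e|s` of an environment to a set of variables. -/
def Env.restrict : Env → Finset ℕ → Env
  | .nil, _ => .nil
  | .cons x c e, s => if x ∈ s then .cons x c (Env.restrict e s) else Env.restrict e s

mutual
  /-- Decoding of a closure into a λ-term. -/
  def Clo.decode : Clo → Term
    | .mk t e => Env.decode t e
  /-- Decoding: `(t, ε)↓ = t`, `(t, [x←c]·e)↓ = (t{x:=c↓}, e)↓`. -/
  def Env.decode : Term → Env → Term
    | t, .nil => t
    | t, .cons x c e => Env.decode (Term.subst x (Clo.decode c) t) e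
end

mutual
  /-- Hereditary number of closures in a closure (without sharing). -/
  def Clo.count : Clo → ℕ
    | .mk _ e => 1 + Env.count e
  def Env.count : Env → ℕ
    | .nil => 0
    | .cons _ c e => Clo.count c + Env.count e
end

mutual
  /-- A closure `(t,e)` is closed: `fv t ⊆ dom e` and hereditarily so. -/
  def Clo.Closed : Clo → Prop
    | .mk t e => t.fv ⊆ e.dom ∧ Env.ClosedE e
  def Env.ClosedE : Env → Prop
    | .nil => True
    | .cons _ c e => Clo.Closed c ∧ Env.ClosedE e
end

mutual
  /-- Environment domain invariant: `dom e = fv t`, hereditarily. -/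
  def Clo.DomInv : Clo → Prop
    | .mk t e => e.dom = t.fv ∧ Env.DomInvE e
  def Env.DomInvE : Env → Prop
    | .nil => True
    | .cons _ c e => Clo.DomInv c ∧ Env.DomInvE e
end

/-- Size of the left address of (the first occurrence of) `u` in the code `t0`:
the binary length of its index in the in-order enumeration of the constructors of `t0`. -/
def addrSize (t0 u : Term) : ℕ := Nat.size (t0.inorder.idxOf u)

mutual
  /-- Size of a closure, relative to the initial code `t0`. -/
  def Clo.size : Term → Clo → ℕ
    | t0, .mk u e => addrSize t0 u + Env.sizeE t0 e
  /-- Size of an environment, relative to the initial code `t0`. -/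
  def Env.sizeE : Term → Env → ℕ
    | _, .nil => 0
    | t0, .cons x c e => addrSize t0 (Term.var x) + Clo.size t0 c + Env.sizeE t0 e
end

def stackSize (t0 : Term) (S : List Clo) : ℕ := (S.map (Clo.size t0)).sum

/-- States of the (Naive/Space) KAM. -/
structure State where
  tm : Term
  env : Env
  stk : List Clo

/-- Size of a state, relative to the initial code `t0`. -/
def State.size (t0 : Term) (s : State) : ℕ :=
  addrSize t0 s.tm + Env.sizeE t0 s.env + stackSize t0 s.stk

/-- Closure count of a state: total number of closures occurring in it,
hereditarily and without sharing (the active term/environment pair is a closure). -/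
def State.count (s : State) : ℕ :=
  1 + Env.count s.env + (s.stk.map Clo.count).sum

def State.decode (s : State) : Term :=
  s.stk.foldl (fun a c => Term.app a c.decode) (Env.decode s.tm s.env)

def initState (t : Term) : State := ⟨t, .nil, []⟩

/-! The Naive KAM. -/
inductive NK : State → State → Prop
  | sea (t u : Term) (e : Env) (S : List Clo) :
      NK ⟨.app t u, e, S⟩ ⟨t, e, .mk u e :: S⟩
  | beta (x : ℕ) (t : Term) (e : Env) (c : Clo) (S : List Clo) :
      NK ⟨.lam x t, e, c :: S⟩ ⟨t, .cons x c e, S⟩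
  | sub {x : ℕ} {e : Env} {u : Term} {e' : Env} (S : List Clo) :
      Env.lookup e x = some (.mk u e') → NK ⟨.var x, e, S⟩ ⟨u, e', S⟩

def NKFinal (s : State) : Prop := ∀ s', ¬ NK s s'

/-- Naive KAM runs counting the number of β-transitions. -/
inductive NKRun : ℕ → State → State → Prop
  | refl (s : State) : NKRun 0 s s
  | sea {t u : Term} {e : Env} {S : List Clo} {s' : State} {n : ℕ} :
      NKRun n ⟨t, e, .mk u e :: S⟩ s' → NKRun n ⟨.app t u, e, S⟩ s'
  | beta {x : ℕ} {t : Term} {e : Env} {c : Clo} {S : List Clo} {s' : State} {n : ℕ} :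
      NKRun n ⟨t, .cons x c e, S⟩ s' → NKRun (n + 1) ⟨.lam x t, e, c :: S⟩ s'
  | sub {x : ℕ} {e : Env} {u : Term} {e' : Env} {S : List Clo} {s' : State} {n : ℕ} :
      Env.lookup e x = some (.mk u e') → NKRun n ⟨u, e', S⟩ s' → NKRun n ⟨.var x, e, S⟩ s'

/-! The Space KAM. -/
inductive SK : State → State → Prop
  | seav {t : Term} {x : ℕ} {e : Env} {c : Clo} (S : List Clo) :
      Env.lookup e x = some c →
      SK ⟨.app t (.var x), e, S⟩ ⟨t, e.restrict t.fv, c :: S⟩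
  | seanv {t u : Term} {e : Env} (S : List Clo) :
      (∀ x, u ≠ .var x) →
      SK ⟨.app t u, e, S⟩ ⟨t, e.restrict t.fv, .mk u (e.restrict u.fv) :: S⟩
  | betaw {x : ℕ} {t : Term} {e : Env} (c : Clo) (S : List Clo) :
      x ∉ t.fv → SK ⟨.lam x t, e, c :: S⟩ ⟨t, e, S⟩
  | betanw {x : ℕ} {t : Term} {e : Env} (c : Clo) (S : List Clo) :
      x ∈ t.fv → SK ⟨.lam x t, e, c :: S⟩ ⟨t, .cons x c e, S⟩
  | sub {x : ℕ} {e : Env} {u : Term} {e' : Env} (S : List Clo) :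
      Env.lookup e x = some (.mk u e') → SK ⟨.var x, e, S⟩ ⟨u, e', S⟩

def SKFinal (s : State) : Prop := ∀ s', ¬ SK s s'

/-- Space KAM runs counting the number of β-transitions (`→βw` and `→β¬w`). -/
inductive SKRun : ℕ → State → State → Prop
  | refl (s : State) : SKRun 0 s s
  | seav {t : Term} {x : ℕ} {e : Env} {c : Clo} {S : List Clo} {s' : State} {n : ℕ} :
      Env.lookup e x = some c →
      SKRun n ⟨t, e.restrict t.fv, c :: S⟩ s' → SKRun n ⟨.app t (.var x), e, S⟩ s'
  | seanv {t u : Term} {e : Env} {S : List Clo} {s' : State} {n : ℕ} :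
      (∀ x, u ≠ .var x) →
      SKRun n ⟨t, e.restrict t.fv, .mk u (e.restrict u.fv) :: S⟩ s' →
      SKRun n ⟨.app t u, e, S⟩ s'
  | betaw {x : ℕ} {t : Term} {e : Env} {c : Clo} {S : List Clo} {s' : State} {n : ℕ} :
      x ∉ t.fv → SKRun n ⟨t, e, S⟩ s' → SKRun (n + 1) ⟨.lam x t, e, c :: S⟩ s'
  | betanw {x : ℕ} {t : Term} {e : Env} {c : Clo} {S : List Clo} {s' : State} {n : ℕ} :
      x ∈ t.fv → SKRun n ⟨t, .cons x c e, S⟩ s' → SKRun (n + 1) ⟨.lam x t, e, c :: S⟩ s'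
  | sub {x : ℕ} {e : Env} {u : Term} {e' : Env} {S : List Clo} {s' : State} {n : ℕ} :
      Env.lookup e x = some (.mk u e') → SKRun n ⟨u, e', S⟩ s' → SKRun n ⟨.var x, e, S⟩ s'

/-! Concrete combinators. -/

/-- I := λx.x -/
def tmI : Term := .lam 0 (.var 0)
/-- θ := λx.λy.y (x x y)  (variables: x := 0, y := 1) -/
def tmTheta : Term := .lam 0 (.lam 1 (.app (.var 1) (.app (.app (.var 0) (.var 0)) (.var 1))))
/-- fix := θ θ -/
def tmFix : Term := .app tmTheta tmTheta
/-- x x y -/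
def xxy : Term := .app (.app (.var 0) (.var 0)) (.var 1)
/-- toyaux := λf.λz. z f f I  (f := 3, z := 2) -/
def tmToyaux : Term := .lam 3 (.lam 2 (.app (.app (.app (.var 2) (.var 3)) (.var 3)) tmI))
/-- toy := fix toyaux -/
def tmToy : Term := .app tmFix tmToyaux

/-- Scott encoding of binary strings (false = 0, true = 1; x0 := 4, x1 := 5, xε := 6):
`⟨ε⟩ := λx0.λx1.λxε.xε`, `⟨b·r⟩ := λx0.λx1.λxε.xb ⟨r⟩`. -/
def encStr : List Bool → Term
  | [] => .lam 4 (.lam 5 (.lam 6 (.var 6)))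
  | b :: r => .lam 4 (.lam 5 (.lam 6 (.app (.var (if b then 5 else 4)) (encStr r))))

/-- A variable fresh for `t`. -/
def freshVar (t : Term) : ℕ := t.fv.sup id + 1

/-- η-expansion: `η(t) := λx. t x` with `x ∉ fv t`. -/
def Term.eta (t : Term) : Term := .lam (freshVar t) (.app t (.var (freshVar t)))

/-- n-fold η-expansion. -/
def etaN (n : ℕ) (t : Term) : Term := Term.eta^[n] t

/-! Environment families for the Naive KAM scrolling invariant
(variables: x := 0, y := 1, z := 2, f := 3, x0 := 4, x1 := 5, xε := 6). -/

/-- `e0 := [x←(θ,ε)]·[y←(toyaux,ε)]`, `e(i+1) := [x←(x,ei)]·[y←(y,ei)]`. -/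
def eE : ℕ → Env
  | 0 => .cons 0 (.mk tmTheta .nil) (.cons 1 (.mk tmToyaux .nil) .nil)
  | i + 1 => .cons 0 (.mk (.var 0) (eE i)) (.cons 1 (.mk (.var 1) (eE i)) .nil)

/-- `e″0 := ε`, `e″(i+1) := [xε←(I,e′i)]·[x1←(f,e′i)]·[x0←(f,e′i)]·e″i`
(with `e′i` inlined). -/
def eDD (s : List Bool) : ℕ → Env
  | 0 => .nil
  | i + 1 =>
    let ep : Env := .cons 2 (.mk (encStr (s.drop i)) (eDD s i)) (.cons 3 (.mk xxy (eE i)) .nil)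
    .cons 6 (.mk tmI ep) (.cons 5 (.mk (.var 3) ep) (.cons 4 (.mk (.var 3) ep) (eDD s i)))

/-- `e′i := [z←(⟨b(i+1)⋯bn⟩, e″i)]·[f←(x x y, ei)]`. -/
def eP (s : List Bool) (i : ℕ) : Env :=
  .cons 2 (.mk (encStr (s.drop i)) (eDD s i)) (.cons 3 (.mk xxy (eE i)) .nil)

/-! The family `tn` for the abstract-time overhead explosion
(variables `xi := i`). -/

/-- `x0 x1 ⋯ xn`. -/
def varsApp : ℕ → Term
  | 0 => .var 0
  | n + 1 => .app (varsApp n) (.var (n + 1))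

/-- Term component of `Sn`: `x0 x0` for `n = 0`, `x0 ⋯ xn` for `n ≥ 1`. -/
def sTerm : ℕ → Term
  | 0 => .app (.var 0) (.var 0)
  | n + 1 => varsApp (n + 1)

/-- `e0 := [x0←(I,ε)]`, `e(n+1) := [x(n+1)←Sn]·en`. -/
def eN : ℕ → Env
  | 0 => .cons 0 (.mk tmI .nil) .nil
  | n + 1 => .cons (n + 1) (.mk (sTerm n) (eN n)) (eN n)

/-- `Sn := (sTerm n, en)`. -/
def sClo (n : ℕ) : Clo := .mk (sTerm n) (eN n)

/-- `Ci⟨t⟩ := λxi. t (x0 ⋯ xi)` (with `C0⟨t⟩ = λx0. t (x0 x0)`). -/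
def cPlug (i : ℕ) (t : Term) : Term := .lam i (.app t (sTerm i))

/-- `C0⟨C1⟨⋯Cn⟨t⟩⋯⟩⟩`. -/
def nest (n : ℕ) (t : Term) : Term := (List.range (n + 1)).foldr cPlug t

/-- `tn := C0⟨C1⟨⋯Cn⟨λy.I⟩⋯⟩⟩ I`. -/
def tN (n : ℕ) : Term := .app (nest n (.lam 1 tmI)) tmI

/-! Global-copy scrolling terms (s′ := 7, z := 2, x := 0, f := 3). -/

/-- `λf.λs′. s′ f f z` (free variable z). -/
def tScroll : Term :=
  .lam 3 (.lam 7 (.app (.app (.app (.var 7) (.var 3)) (.var 3)) (.var 2)))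

/-- `glCpy := λx.( fix (λf.λs′. s′ f f x) ) x`. -/
def glCpy : Term :=
  .lam 0 (.app (.app tmFix
    (.lam 3 (.lam 7 (.app (.app (.app (.var 7) (.var 3)) (.var 3)) (.var 0)))))
    (.var 0))

/-! The Space LAM. -/

structure LState where
  dump : List (Clo × List Clo)
  tm : Term
  env : Env
  stk : List Clo

inductive LAM : LState → LState → Prop
  | sea {D : List (Clo × List Clo)} {t u : Term} {e : Env} {S : List Clo} :
      LAM ⟨D, .app t u, e, S⟩ ⟨(.mk t (e.restrict t.fv), S) :: D, u, e.restrict u.fv, []⟩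
  | ret {D : List (Clo × List Clo)} {u : Term} {e' : Env} {S : List Clo}
      {x : ℕ} {t : Term} {e : Env} :
      LAM ⟨(.mk u e', S) :: D, .lam x t, e, []⟩ ⟨D, u, e', .mk (.lam x t) e :: S⟩
  | betaw {D : List (Clo × List Clo)} {x : ℕ} {t : Term} {e : Env} {c : Clo} {S : List Clo} :
      x ∉ t.fv → LAM ⟨D, .lam x t, e, c :: S⟩ ⟨D, t, e, S⟩
  | betanw {D : List (Clo × List Clo)} {x : ℕ} {t : Term} {e : Env} {c : Clo} {S : List Clo} :
      x ∈ t.fv → LAM ⟨D, .lam x t, e, c :: S⟩ ⟨D, t, .cons x c e, S⟩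
  | sub {D : List (Clo × List Clo)} {x : ℕ} {e : Env} {u : Term} {e' : Env} {S : List Clo} :
      Env.lookup e x = some (.mk u e') → LAM ⟨D, .var x, e, S⟩ ⟨D, u, e', S⟩

def LFinal (ls : LState) : Prop := ∀ ls', ¬ LAM ls ls'

/-- The Space KAM state `(t,e,S)` seen as the Space LAM state `(ε,t,e,S)`. -/
def embed (s : State) : LState := ⟨[], s.tm, s.env, s.stk⟩

def lInit (t : Term) : LState := ⟨[], t, .nil, []⟩

def LState.size (t0 : Term) (ls : LState) : ℕ :=
  (ls.dump.map (fun p => Clo.size t0 p.1 + stackSize t0 p.2)).sum +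
    addrSize t0 ls.tm + Env.sizeE t0 ls.env + stackSize t0 ls.stk

/-- A LAM-sequence from `a` whose first state with empty dump after `a` is its target. -/
inductive LRunToEmpty : LState → LState → Prop
  | single {a b : LState} : LAM a b → b.dump = [] → LRunToEmpty a b
  | cons {a b c : LState} : LAM a b → b.dump ≠ [] → LRunToEmpty b c → LRunToEmpty a c

/-! Log-sensitive Turing machines. -/

/-- Input-tape alphabet {0, 1, L, R}. -/
inductive ISym : Type | zero | one | lend | rend
deriving DecidableEq

/-- Work-tape alphabet {0, 1, □}. -/
inductive WSym : Type | zero | one | blank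
deriving DecidableEq

/-- Head moves. -/
inductive Move : Type | L | R | N
deriving DecidableEq

/-- A log-sensitive Turing machine: states `Fin n`, initial state, final states
`qtrue = s1` and `qfalse = s0`, and a deterministic transition function reading the
current state and the two scanned symbols, writing on the work tape, moving both
heads, and changing state (`none` = halt). -/
structure TM where
  n : ℕ
  start : Fin n
  qtrue : Fin n
  qfalse : Fin n
  δ : Fin n → ISym → WSym → Option (Fin n × WSym × Move × Move)

/-- A configuration: state, input-head position (on the tape `L i R`), and the
work tape split as (left part, reversed) / scanned symbol / (right part). -/
structure Config (M : TM) where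
  q : Fin M.n
  ipos : ℕ
  wl : List WSym
  wcur : WSym
  wr : List WSym

/-- The symbol of the input tape `L i R` at a given position. -/
def inputAt (i : List Bool) (p : ℕ) : ISym :=
  if p = 0 then .lend
  else if h : p - 1 < i.length then (if i.get ⟨p - 1, h⟩ then .one else .zero)
  else .rend

def moveIpos (p : ℕ) : Move → ℕ
  | .L => p - 1
  | .R => p + 1
  | .N => p

def moveWork (wl : List WSym) (c : WSym) (wr : List WSym) : Move → List WSym × WSym × List WSym
  | .L => match wl with
    | [] => ([], .blank, c :: wr)
    | a :: l => (l, a, c :: wr)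
  | .R => match wr with
    | [] => (c :: wl, .blank, [])
    | a :: r => (c :: wl, a, r)
  | .N => (wl, c, wr)

/-- One transition of the TM `M` on input `i`. -/
def TMStep (M : TM) (i : List Bool) (c c' : Config M) : Prop :=
  ∃ q' w mi mw, M.δ c.q (inputAt i c.ipos) c.wcur = some (q', w, mi, mw) ∧
    c'.q = q' ∧ c'.ipos = moveIpos c.ipos mi ∧
    (c'.wl, c'.wcur, c'.wr) = moveWork c.wl w c.wr mw

def initConfig (M : TM) : Config M := ⟨M.start, 0, [], .blank, []⟩

/-- Number of work-tape cells used by a configuration. -/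
def Config.workSize {M : TM} (c : Config M) : ℕ := c.wl.length + 1 + c.wr.length

def TMFinal (M : TM) (i : List Bool) (c : Config M) : Prop := ∀ c', ¬ TMStep M i c c'

/-- `⟨1⟩ := λx.λy.x` and `⟨0⟩ := λx.λy.y`. -/
def encBool (b : Bool) : Term :=
  if b then .lam 0 (.lam 1 (.var 0)) else .lam 0 (.lam 1 (.var 1))

/-! The run from `η^n(t)` starts with `2n` transitions `→β¬w`, `→seav` that strip one `η` each
and lead to the initial state of the run from `t`; each of these states holds exactly the
closures `c·S`, so closure counts are unchanged. The space of a state is at most twice its closure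
count times the binary length of the largest address of the code, and `η^n(t)` has `|t| + 3n`
constructors, whence the `log n` factor. The run from `t` is finite, the machine being
deterministic, so both maxima are attained; its space is positive, since within one step the
machine runs code other than the root of `t`, the only subterm with address `0`. -/

namespace Relation

variable {α : Type*} {r : α → α → Prop}

theorem ReflTransGen.eq_or_of_rightUnique (hr : Relator.RightUnique r) {a b c : α}
    (hab : r a b) (hac : ReflTransGen r a c) : c = a ∨ ReflTransGen r b c := by
  rcases hac.cases_head with rfl | ⟨b', hab', hb'c⟩
  · exact Or.inl rfl
  · exact Or.inr (hr hab hab' ▸ hb'c)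

theorem finite_setOf_reflTransGen_of_rightUnique (hr : Relator.RightUnique r) {a f : α}
    (haf : ReflTransGen r a f) (hf : ∀ b, ¬ r f b) : {b | ReflTransGen r a b}.Finite := by
  induction haf using ReflTransGen.head_induction_on with
  | refl =>
    refine (Set.finite_singleton f).subset fun b hb => ?_
    rcases hb.cases_head with rfl | ⟨c, hfc, -⟩
    · rfl
    · exact absurd hfc (hf c)
  | @head a b hab _ ih =>
    exact (ih.insert a).subset fun c hc => ReflTransGen.eq_or_of_rightUnique hr hab hc

end Relation

open Relation

theorem SK.rightUnique : Relator.RightUnique SK := by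
  intro a b b' h h'
  cases h <;> cases h' <;> simp_all

theorem Env.eq_nil_of_dom_eq_empty : ∀ {e : Env}, e.dom = ∅ → e = .nil
  | .nil, _ => rfl
  | .cons _ _ _, h => by simp [Env.dom] at h

namespace Term

theorem inorder_ne_nil (t : Term) : t.inorder ≠ [] := by
  cases t <;> simp [inorder]

theorem head?_inorder_ne_app (u v : Term) : ∀ t : Term, t.inorder.head? ≠ some (app u v)
  | var _ | lam _ _ => by simp [inorder]
  | app t _ => by
    rw [inorder, List.head?_append_of_ne_nil _ t.inorder_ne_nil]
    exact head?_inorder_ne_app u v t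

theorem eta_of_closed {t : Term} (ht : t.fv = ∅) : t.eta = lam 1 (app t (var 1)) := by
  simp [eta, freshVar, ht]

end Term

theorem etaN_succ (n : ℕ) (t : Term) : etaN (n + 1) t = (etaN n t).eta :=
  Function.iterate_succ_apply' _ _ _

theorem fv_etaN {t : Term} (ht : t.fv = ∅) : ∀ n, (etaN n t).fv = ∅
  | 0 => ht
  | n + 1 => by simp [etaN_succ, Term.eta_of_closed (fv_etaN ht n), Term.fv, fv_etaN ht n]

theorem length_inorder_etaN {t : Term} (ht : t.fv = ∅) :
    ∀ n, (etaN n t).inorder.length = t.inorder.length + 3 * n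
  | 0 => rfl
  | n + 1 => by
    rw [etaN_succ, Term.eta_of_closed (fv_etaN ht n)]
    simp only [Term.inorder, List.length_cons, List.length_append, List.length_nil,
      length_inorder_etaN ht n]
    ring

def maxAddrSize (t0 : Term) : ℕ := Nat.size t0.inorder.length

theorem addrSize_le_maxAddrSize (t0 u : Term) : addrSize t0 u ≤ maxAddrSize t0 :=
  Nat.size_le_size List.idxOf_le_length

theorem addrSize_pos_of_head?_ne {t0 u : Term} (h : t0.inorder.head? ≠ some u) :
    0 < addrSize t0 u := by
  refine Nat.size_pos.2 (Nat.pos_of_ne_zero fun h0 => ?_)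
  rcases (List.idxOf_eq_zero_iff_eq_nil_or_head_eq u).1 h0 with hnil | hhead
  · exact t0.inorder_ne_nil hnil
  · exact h hhead

section SizeBound

variable (t0 : Term)

-- Each closure contributes one term address, plus one variable address when it is bound in an
-- environment.
mutual
theorem Clo.size_add_le : ∀ c : Clo,
    c.size t0 + maxAddrSize t0 ≤ 2 * c.count * maxAddrSize t0
  | .mk u e => by
    have := Env.sizeE_le e
    have := addrSize_le_maxAddrSize t0 u
    simp only [Clo.size, Clo.count]
    nlinarith

theorem Env.sizeE_le : ∀ e : Env, e.sizeE t0 ≤ 2 * e.count * maxAddrSize t0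
  | .nil => by simp [Env.sizeE]
  | .cons x c e => by
    have := Clo.size_add_le c
    have := Env.sizeE_le e
    have := addrSize_le_maxAddrSize t0 (.var x)
    simp only [Env.sizeE, Env.count]
    nlinarith
end

theorem stackSize_le : ∀ S : List Clo,
    stackSize t0 S ≤ 2 * (S.map Clo.count).sum * maxAddrSize t0
  | [] => by simp [stackSize]
  | c :: S => by
    have := Clo.size_add_le t0 c
    have := stackSize_le S
    simp only [stackSize, List.map_cons, List.sum_cons] at *
    nlinarith

theorem State.size_le_count (s : State) : s.size t0 ≤ 2 * s.count * maxAddrSize t0 := by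
  have := addrSize_le_maxAddrSize t0 s.tm
  have := Env.sizeE_le t0 s.env
  have := stackSize_le t0 s.stk
  simp only [State.size, State.count]
  nlinarith

end SizeBound

theorem size_add_three_mul_le (T n : ℕ) :
    Nat.size (T + 3 * n) ≤ (T + 4) * Nat.log 2 (n + 2) := by
  set L := Nat.log 2 (n + 2)
  have hL : 1 ≤ L := Nat.log_pos (by norm_num) (by omega)
  have hn : n + 2 < 2 ^ (L + 1) := Nat.lt_pow_succ_log_self (by norm_num) _
  have hT : T + 3 < 2 ^ (T + 2) := by
    induction T with
    | zero => norm_num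
    | succ T ih => rw [pow_succ]; omega
  rw [Nat.size_le]
  calc T + 3 * n < (T + 3) * (n + 2) := by nlinarith
    _ < 2 ^ (T + 2) * 2 ^ (L + 1) := Nat.mul_lt_mul_of_lt_of_le hT hn.le (by positivity)
    _ = 2 ^ (T + L + 3) := by rw [← pow_add]; ring_nf
    _ ≤ 2 ^ ((T + 4) * L) := Nat.pow_le_pow_right (by norm_num) (by nlinarith)

theorem maxAddrSize_etaN_le {t : Term} (ht : t.fv = ∅) (n : ℕ) :
    maxAddrSize (etaN n t) ≤ (t.inorder.length + 4) * Nat.log 2 (n + 2) := by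
  rw [maxAddrSize, length_inorder_etaN ht]
  exact size_add_three_mul_le _ _

section EtaRun

variable {t : Term} (c : Clo) (S : List Clo)

theorem SK.eta_of_closed (ht : t.fv = ∅) :
    SK ⟨t.eta, .nil, c :: S⟩ ⟨.app t (.var 1), .cons 1 c .nil, S⟩ := by
  rw [Term.eta_of_closed ht]
  exact SK.betanw c S (by simp [Term.fv])

theorem SK.app_var_of_closed (ht : t.fv = ∅) :
    SK ⟨.app t (.var 1), .cons 1 c .nil, S⟩ ⟨t, .nil, c :: S⟩ := by
  have h := SK.seav (t := t) (x := 1) (e := .cons 1 c .nil) (c := c) S (by simp [Env.lookup])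
  rwa [ht, show (Env.cons 1 c .nil).restrict ∅ = .nil by simp [Env.restrict]] at h

theorem reflTransGen_SK_etaN (ht : t.fv = ∅) :
    ∀ n, ReflTransGen SK ⟨etaN n t, .nil, c :: S⟩ ⟨t, .nil, c :: S⟩
  | 0 => .refl
  | n + 1 => by
    rw [etaN_succ]
    exact .head (SK.eta_of_closed c S (fv_etaN ht n))
      (.head (SK.app_var_of_closed c S (fv_etaN ht n)) (reflTransGen_SK_etaN ht n))

theorem reflTransGen_SK_etaN_or_count_eq (ht : t.fv = ∅) :
    ∀ n s, ReflTransGen SK ⟨etaN n t, .nil, c :: S⟩ s →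
      ReflTransGen SK ⟨t, .nil, c :: S⟩ s ∨ s.count = State.count ⟨t, .nil, c :: S⟩
  | 0, _, hs => .inl hs
  | n + 1, s, hs => by
    have hcount : State.count ⟨.app (etaN n t) (.var 1), .cons 1 c .nil, S⟩ =
        State.count ⟨t, .nil, c :: S⟩ := by
      simp only [State.count, Env.count, List.map_cons, List.sum_cons]; ring
    rw [etaN_succ] at hs
    rcases hs.eq_or_of_rightUnique SK.rightUnique (SK.eta_of_closed c S (fv_etaN ht n))
      with rfl | hs
    · exact .inr rfl
    rcases hs.eq_or_of_rightUnique SK.rightUnique (SK.app_var_of_closed c S (fv_etaN ht n))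
      with rfl | hs
    · exact .inr hcount
    exact reflTransGen_SK_etaN_or_count_eq ht n s hs

end EtaRun

theorem exists_reflTransGen_SK_size_pos {t : Term} (ht : t.fv = ∅) (e : Env) (c : Clo)
    (S : List Clo) : ∃ s, ReflTransGen SK ⟨t, e, c :: S⟩ s ∧ 0 < s.size t := by
  match t with
  | .var x => simp [Term.fv] at ht
  | .app u v =>
    refine ⟨_, .refl, ?_⟩
    have := addrSize_pos_of_head?_ne (Term.head?_inorder_ne_app u v (.app u v))
    simp only [State.size]; omega
  | .lam x b =>
    have hb : 0 < addrSize (.lam x b) b := by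
      refine addrSize_pos_of_head?_ne fun h => ?_
      simpa [Term.inorder] using congrArg sizeOf (Option.some_injective _ h)
    by_cases hx : x ∈ b.fv
    · exact ⟨_, .single (SK.betanw c S hx), by simp only [State.size]; omega⟩
    · exact ⟨_, .single (SK.betaw c S hx), by simp only [State.size]; omega⟩

/-- The maxima of the closure counts along the runs are expressed by mutual
cofinality of the sets of closure counts of the states of the two runs. -/
theorem space_kam_abstract_space_eta_invariant
    (t : Term) (ht : t.closed) (e : Env) (c : Clo) (S : List Clo)
    (he : e.dom = t.fv) (hc : c.Closed) (hS : ∀ c' ∈ S, Clo.Closed c')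
    (hterm : ∃ f, Relation.ReflTransGen SK ⟨t, e, c :: S⟩ f ∧ SKFinal f) :
    (∀ n : ℕ,
      (∀ s, Relation.ReflTransGen SK ⟨etaN n t, e, c :: S⟩ s →
        ∃ s', Relation.ReflTransGen SK ⟨t, e, c :: S⟩ s' ∧ s.count ≤ s'.count) ∧
      (∀ s', Relation.ReflTransGen SK ⟨t, e, c :: S⟩ s' →
        ∃ s, Relation.ReflTransGen SK ⟨etaN n t, e, c :: S⟩ s ∧ s'.count ≤ s.count)) ∧
    ∃ S0 : ℕ,
      ((∀ s, Relation.ReflTransGen SK ⟨t, e, c :: S⟩ s → s.size t ≤ S0) ∧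
        (∃ s, Relation.ReflTransGen SK ⟨t, e, c :: S⟩ s ∧ s.size t = S0)) ∧
      ∃ k : ℕ, 0 < k ∧ ∀ (n : ℕ) (s : State),
        Relation.ReflTransGen SK ⟨etaN n t, e, c :: S⟩ s →
        s.size (etaN n t) ≤ k * (Nat.log 2 (n + 2) * S0 + 1) := by
  obtain rfl : e = .nil := Env.eq_nil_of_dom_eq_empty (he.trans ht)
  obtain ⟨f, hf, hfinal⟩ := hterm
  have hfin := finite_setOf_reflTransGen_of_rightUnique SK.rightUnique hf hfinal
  obtain ⟨smax, hsmax, hsize⟩ := Set.exists_max_image _ (State.size t) hfin ⟨_, .refl⟩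
  obtain ⟨cmax, -, hcount⟩ := Set.exists_max_image _ State.count hfin ⟨_, .refl⟩
  have hcofinal n s (hs : ReflTransGen SK ⟨etaN n t, .nil, c :: S⟩ s) :
      ∃ s', ReflTransGen SK ⟨t, .nil, c :: S⟩ s' ∧ s.count ≤ s'.count := by
    rcases reflTransGen_SK_etaN_or_count_eq c S ht n s hs with hs | hs
    exacts [⟨s, hs, le_rfl⟩, ⟨_, .refl, hs.le⟩]
  obtain ⟨s₁, hs₁, hpos⟩ := exists_reflTransGen_SK_size_pos ht .nil c S
  have hS0 : 1 ≤ smax.size t := hpos.trans_le (hsize s₁ hs₁)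
  refine ⟨fun n => ⟨hcofinal n, fun s' hs' => ⟨s', (reflTransGen_SK_etaN c S ht n).trans hs',
    le_rfl⟩⟩, smax.size t, ⟨hsize, smax, hsmax, rfl⟩,
    2 * cmax.count * (t.inorder.length + 4) + 1, Nat.succ_pos _, fun n s hs => ?_⟩
  obtain ⟨s', hs', hle⟩ := hcofinal n s hs
  set L := Nat.log 2 (n + 2)
  calc s.size (etaN n t) ≤ 2 * s.count * maxAddrSize (etaN n t) := State.size_le_count _ s
    _ ≤ 2 * cmax.count * ((t.inorder.length + 4) * L) :=
      Nat.mul_le_mul (Nat.mul_le_mul_left 2 (hle.trans (hcount s' hs')))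
        (maxAddrSize_etaN_le ht n)
    _ = 2 * cmax.count * (t.inorder.length + 4) * L := by ring
    _ ≤ (2 * cmax.count * (t.inorder.length + 4) + 1) * (L * smax.size t + 1) :=
      Nat.mul_le_mul (Nat.le_succ _) (Nat.le_succ_of_le (Nat.le_mul_of_pos_right L hS0))
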